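/- Let G be a factorizable graph, M a perfect matching of G, and u, v ∈ V(G). Then G − u − v has a perfect matching if and only if there is an M-saturated path of G between u and v. -/

import Mathlib

open SimpleGraph

variable {V : Type*}

/-- `M` is a matching of `G`, given as a set of edges. -/
def IsMatchingSet (G : SimpleGraph V) (M : Set (Sym2 V)) : Prop :=
  M ⊆ G.edgeSet ∧ ∀ (v : V), ∀ e ∈ M, ∀ f ∈ M, v ∈ e → v ∈ f → e = f

/-- `M` is a perfect matching of `G`: every vertex lies on exactly one edge of `M`. -/
def IsPerfectMatchingSet (G : SimpleGraph V) (M : Set (Sym2 V)) : Prop :=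
  M ⊆ G.edgeSet ∧ ∀ v : V, ∃! e, e ∈ M ∧ v ∈ e

/-- `M` is a maximum matching of `G`. -/
def IsMaximumMatchingSet (G : SimpleGraph V) (M : Set (Sym2 V)) : Prop :=
  IsMatchingSet G M ∧ ∀ M', IsMatchingSet G M' → M'.ncard ≤ M.ncard

/-- `v` is exposed by the matching `M`. -/
def ExposedBy (M : Set (Sym2 V)) (v : V) : Prop := ∀ e ∈ M, v ∉ e

/-- The Gallai–Edmonds set `D(G)`: vertices missed by some maximum matching. -/
def Dset (G : SimpleGraph V) : Set V :=
  {v | ∃ M, IsMaximumMatchingSet G M ∧ ExposedBy M v}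

/-- `A(G) = Γ_G(D(G))`, the neighbors of `D(G)` outside `D(G)`. -/
def Aset (G : SimpleGraph V) : Set V :=
  {v | v ∉ Dset G ∧ ∃ u ∈ Dset G, G.Adj u v}

/-- `C(G) = V(G) \ (D(G) ∪ A(G))`. -/
def Cset (G : SimpleGraph V) : Set V :=
  {v | v ∉ Dset G ∧ v ∉ Aset G}

/-- A graph is factorizable if it has a perfect matching. -/
def Factorizable (G : SimpleGraph V) : Prop := ∃ M, IsPerfectMatchingSet G M

/-- A walk is `M`-alternating if its edges alternate between `M` and its complement. -/
def IsAltWalk {G : SimpleGraph V} {u v : V} (M : Set (Sym2 V)) (p : G.Walk u v) : Prop :=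
  List.Chain' (fun e f => e ∈ M ↔ f ∉ M) p.edges

/-- An `M`-balanced path from `u` to `v`: an even `M`-alternating path whose matching
edges form a near-perfect matching of the path exposing only `v` (first edge is in `M`). -/
def IsBalancedPath {G : SimpleGraph V} {u v : V} (M : Set (Sym2 V)) (p : G.Walk u v) : Prop :=
  p.IsPath ∧ Even p.length ∧ IsAltWalk M p ∧ ∀ e, p.edges.head? = some e → e ∈ M

/-- An `M`-saturated path: odd `M`-alternating, matching edges perfectly cover the path. -/
def IsSaturatedPath {G : SimpleGraph V} {u v : V} (M : Set (Sym2 V)) (p : G.Walk u v) : Prop :=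
  p.IsPath ∧ Odd p.length ∧ IsAltWalk M p ∧ ∀ e, p.edges.head? = some e → e ∈ M

/-- An `M`-exposed path: odd `M`-alternating, non-matching edges perfectly cover the path. -/
def IsExposedPath {G : SimpleGraph V} {u v : V} (M : Set (Sym2 V)) (p : G.Walk u v) : Prop :=
  p.IsPath ∧ Odd p.length ∧ IsAltWalk M p ∧ ∀ e, p.edges.head? = some e → e ∉ M

/-- The allowed edges of `G`: edges lying in some perfect matching. -/
def allowedEdges (G : SimpleGraph V) : Set (Sym2 V) :=
  {e | ∃ M, IsPerfectMatchingSet G M ∧ e ∈ M}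

/-- `u` and `v` lie in the same factor-connected component of `G`. -/
def SameFC (G : SimpleGraph V) (u v : V) : Prop :=
  (SimpleGraph.fromEdgeSet (allowedEdges G)).Reachable u v

/-- `X` is separating: every factor-connected component lies inside `X` or misses `X`. -/
def IsSeparating (G : SimpleGraph V) (X : Set V) : Prop :=
  ∀ u v : V, SameFC G u v → (u ∈ X ↔ v ∈ X)

/-- A factorizable graph `G` is saturated if adding any non-edge strictly increases
the number of perfect matchings. -/
def Saturated (G : SimpleGraph V) : Prop :=
  Factorizable G ∧ ∀ x y : V, x ≠ y → ¬ G.Adj x y →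
    {N | IsPerfectMatchingSet G N}.ncard <
      {N | IsPerfectMatchingSet (G ⊔ SimpleGraph.fromEdgeSet {s(x, y)}) N}.ncard

/-!
If `N` is a perfect matching of `G - u - v`, let `u'` be the `M`-partner of `u` and `u''` the
`N`-partner of `u'`. Trading the edge `u'u''` of `N` for `uu'` gives a perfect matching `N'` of
`G - u'' - v` with fewer edges outside `M`, so by induction there is an `M`-saturated path from
`u''` to `v` inside `M ∪ N'`. Since `uu'` is the only edge of `M ∪ N'` at `u` and at `u'`, neither
vertex is an inner vertex of that path, and prefixing `u u' u''` gives the required path.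
Conversely, running the same exchange backwards along an `M`-saturated path from `u` to `v` turns
`M` into a perfect matching of `G - u - v`. When `u = v` both sides fail, as `G - u` has an odd
number of vertices.
-/

/-- `N` is a perfect matching of `G.induce S`, recorded by its edges in `V`. -/
def IsPerfectMatchingSetOn (G : SimpleGraph V) (N : Set (Sym2 V)) (S : Set V) : Prop :=
  IsMatchingSet G N ∧ ∀ x, (∃ e ∈ N, x ∈ e) ↔ x ∈ S

namespace IsPerfectMatchingSetOn

variable {G : SimpleGraph V} {N : Set (Sym2 V)} {S : Set V} {u u' u'' v x y : V} {e f : Sym2 V}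

lemma adj (h : IsPerfectMatchingSetOn G N S) (he : s(x, y) ∈ N) : G.Adj x y :=
  h.1.1 he

lemma eq_of_mem (h : IsPerfectMatchingSetOn G N S) (he : e ∈ N) (hf : f ∈ N) (hxe : x ∈ e)
    (hxf : x ∈ f) : e = f :=
  h.1.2 x e he f hf hxe hxf

lemma mem_of_mem (h : IsPerfectMatchingSetOn G N S) (he : e ∈ N) (hx : x ∈ e) : x ∈ S :=
  (h.2 x).1 ⟨e, he, hx⟩

lemma notMem_of_notMem (h : IsPerfectMatchingSetOn G N S) (hx : x ∉ S) (he : e ∈ N) : x ∉ e :=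
  fun hxe => hx (h.mem_of_mem he hxe)

lemma exists_mem (h : IsPerfectMatchingSetOn G N S) (hx : x ∈ S) : ∃ y, s(x, y) ∈ N := by
  obtain ⟨e, he, hxe⟩ := (h.2 x).2 hx
  obtain ⟨y, rfl⟩ := Sym2.mem_iff_exists.mp hxe
  exact ⟨y, he⟩

lemma diff_singleton (h : IsPerfectMatchingSetOn G N S) (he : s(x, y) ∈ N) :
    IsPerfectMatchingSetOn G (N \ {s(x, y)}) (S \ {x, y}) := by
  refine ⟨⟨fun f hf => h.1.1 hf.1, fun w f hf g hg => h.1.2 w f hf.1 g hg.1⟩, fun w => ?_⟩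
  constructor
  · rintro ⟨f, ⟨hf, hfe⟩, hwf⟩
    refine ⟨h.mem_of_mem hf hwf, fun hw => hfe ?_⟩
    rcases hw with rfl | rfl
    · exact h.eq_of_mem hf he hwf (Sym2.mem_mk_left _ _)
    · exact h.eq_of_mem hf he hwf (Sym2.mem_mk_right _ _)
  · rintro ⟨hwS, hw⟩
    obtain ⟨f, hf, hwf⟩ := (h.2 w).2 hwS
    refine ⟨f, ⟨hf, fun hfe => hw ?_⟩, hwf⟩
    rw [Set.mem_singleton_iff.mp hfe] at hwf
    simpa using hwf

lemma insert_edge (h : IsPerfectMatchingSetOn G N S) (hxy : G.Adj x y) (hx : x ∉ S)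
    (hy : y ∉ S) : IsPerfectMatchingSetOn G (insert s(x, y) N) (insert x (insert y S)) := by
  have hxy' : ∀ w ∈ s(x, y), ∀ f ∈ N, w ∉ f := by
    intro w hw f hf hwf
    rcases Sym2.mem_iff.mp hw with rfl | rfl
    exacts [hx (h.mem_of_mem hf hwf), hy (h.mem_of_mem hf hwf)]
  refine ⟨⟨?_, ?_⟩, fun w => ?_⟩
  · rintro f (rfl | hf)
    exacts [hxy, h.1.1 hf]
  · rintro w f (rfl | hf) g (rfl | hg) hwf hwg
    · rfl
    · exact absurd hwg (hxy' w hwf g hg)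
    · exact absurd hwf (hxy' w hwg f hf)
    · exact h.eq_of_mem hf hg hwf hwg
  · simp only [Set.mem_insert_iff, ← h.2 w, or_and_right, exists_or, exists_eq_left,
      Sym2.mem_iff, or_assoc]

lemma exchange (h : IsPerfectMatchingSetOn G N {u, v}ᶜ) (huv : u ≠ v) (hadj : G.Adj u u')
    (he : s(u', u'') ∈ N) :
    IsPerfectMatchingSetOn G (insert s(u, u') (N \ {s(u', u'')})) {u'', v}ᶜ := by
  have hu' := h.mem_of_mem he (Sym2.mem_mk_left _ _)
  have hu'' := h.mem_of_mem he (Sym2.mem_mk_right _ _)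
  convert (h.diff_singleton he).insert_edge hadj (by simp) (by simp) using 1
  ext x
  simp only [Set.mem_compl_iff, Set.mem_insert_iff, Set.mem_singleton_iff, Set.mem_sdiff] at *
  grind [(h.adj he).ne]

lemma eq_of_mem_union_exchange {M : Set (Sym2 V)} {T : Set V}
    (hM : IsPerfectMatchingSetOn G M T) (hN : IsPerfectMatchingSetOn G N S) (hu : u ∉ S)
    (hu' : s(u, u') ∈ M) (hu'' : s(u', u'') ∈ N) (hx : x ∈ s(u, u'))
    (he : e ∈ M ∪ insert s(u, u') (N \ {s(u', u'')})) (hxe : x ∈ e) : e = s(u, u') := by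
  rcases he with heM | rfl | ⟨heN, hne⟩
  · exact hM.eq_of_mem heM hu' hxe hx
  · rfl
  rcases Sym2.mem_iff.mp hx with rfl | rfl
  · exact absurd hxe (hN.notMem_of_notMem hu heN)
  · exact absurd (hN.eq_of_mem heN hu'' hxe (Sym2.mem_mk_left _ _)) hne

end IsPerfectMatchingSetOn

lemma ncard_insert_sdiff_singleton_sdiff_lt {α : Type*} [Finite α] {M N : Set α} {a b : α}
    (ha : a ∈ M) (hb : b ∈ N) (hbM : b ∉ M) : (insert a (N \ {b}) \ M).ncard < (N \ M).ncard := by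
  have hdiff : insert a (N \ {b}) \ M = (N \ M) \ {b} := by
    ext c
    simp only [Set.mem_sdiff, Set.mem_insert_iff, Set.mem_singleton_iff]
    grind
  rw [hdiff]
  exact Set.ncard_sdiff_singleton_lt_of_mem ⟨hb, hbM⟩ (Set.toFinite _)

section

variable {G : SimpleGraph V} {M N : Set (Sym2 V)} {S : Set V}

lemma IsPerfectMatchingSet.isPerfectMatchingSetOn_univ (hM : IsPerfectMatchingSet G M) :
    IsPerfectMatchingSetOn G M Set.univ := by
  refine ⟨⟨hM.1, fun x e he f hf hxe hxf => ?_⟩, fun x => ⟨fun _ => trivial, fun _ => ?_⟩⟩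
  · exact (hM.2 x).unique ⟨he, hxe⟩ ⟨hf, hxf⟩
  · obtain ⟨e, ⟨he, hxe⟩, -⟩ := hM.2 x
    exact ⟨e, he, hxe⟩

lemma IsPerfectMatchingSetOn.even_ncard [Finite V] (h : IsPerfectMatchingSetOn G N S) :
    Even S.ncard := by
  classical
  have := Fintype.ofFinite V
  let H : G.Subgraph :=
    { verts := S
      Adj x y := s(x, y) ∈ N
      adj_sub := h.adj
      edge_vert he := h.mem_of_mem he (Sym2.mem_mk_left _ _)
      symm := ⟨fun x y he => by rwa [Sym2.eq_swap]⟩ }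
  have hH : H.IsMatching := fun x hx => by
    obtain ⟨y, hy⟩ := h.exists_mem hx
    exact ⟨y, hy, fun z hz => Sym2.congr_right.mp
      (h.eq_of_mem hz hy (Sym2.mem_mk_left _ _) (Sym2.mem_mk_left _ _))⟩
  simpa [Set.ncard_eq_toFinset_card'] using hH.even_card

lemma IsPerfectMatchingSet.not_isPerfectMatchingSetOn_compl_singleton [Finite V]
    (hM : IsPerfectMatchingSet G M) (x : V) : ¬ IsPerfectMatchingSetOn G N {x}ᶜ := by
  intro hN
  have hcard := Set.ncard_add_ncard_compl {x}
  rw [Set.ncard_singleton, add_comm] at hcard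
  have hodd : ¬ Even (Nat.card V) := by
    rw [← hcard, Nat.even_add_one, not_not]
    exact hN.even_ncard
  exact hodd (by simpa using hM.isPerfectMatchingSetOn_univ.even_ncard)

lemma factorizable_induce_iff :
    Factorizable (G.induce S) ↔ ∃ N, IsPerfectMatchingSetOn G N S := by
  have hmap (e : Sym2 S) : e.map Subtype.val ∈ G.edgeSet ↔ e ∈ (G.induce S).edgeSet :=
    (Embedding.induce S).map_mem_edgeSet_iff
  constructor
  · rintro ⟨M', hsub, huniq⟩
    refine ⟨Sym2.map Subtype.val '' M', ⟨?_, ?_⟩, fun x => ⟨?_, fun hx => ?_⟩⟩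
    · rintro _ ⟨f, hf, rfl⟩
      exact (hmap f).2 (hsub hf)
    · rintro x _ ⟨f, hf, rfl⟩ _ ⟨g, hg, rfl⟩ hxf hxg
      obtain ⟨a, haf, rfl⟩ := Sym2.mem_map.mp hxf
      obtain ⟨b, hbg, hba⟩ := Sym2.mem_map.mp hxg
      rw [Subtype.val_injective hba] at hbg
      rw [(huniq a).unique ⟨hf, haf⟩ ⟨hg, hbg⟩]
    · rintro ⟨_, ⟨f, -, rfl⟩, hxf⟩
      obtain ⟨a, -, rfl⟩ := Sym2.mem_map.mp hxf
      exact a.2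
    · obtain ⟨f, ⟨hf, hxf⟩, -⟩ := huniq ⟨x, hx⟩
      exact ⟨_, ⟨f, hf, rfl⟩, Sym2.mem_map.mpr ⟨_, hxf, rfl⟩⟩
  · rintro ⟨N, hN⟩
    refine ⟨Sym2.map Subtype.val ⁻¹' N, fun f hf => (hmap f).1 (hN.1.1 hf), fun x => ?_⟩
    obtain ⟨y, hy⟩ := hN.exists_mem x.2
    have hyS : y ∈ S := hN.mem_of_mem hy (Sym2.mem_mk_right _ _)
    refine ⟨s(x, ⟨y, hyS⟩), ⟨hy, Sym2.mem_mk_left _ _⟩, fun f ⟨hf, hxf⟩ => ?_⟩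
    refine Sym2.map.injective Subtype.val_injective (hN.eq_of_mem hf hy ?_ (Sym2.mem_mk_left _ _))
    exact Sym2.mem_map.mpr ⟨x, hxf, rfl⟩

lemma SimpleGraph.Walk.IsPath.eq_or_eq_of_forall_mem_edges {a b x : V} {e : Sym2 V}
    {p : G.Walk a b} (hp : p.IsPath) (hx : x ∈ p.support) (he : ∀ f ∈ p.edges, x ∈ f → f = e) :
    x = a ∨ x = b := by
  by_contra! hab
  obtain ⟨i, rfl, hi⟩ := Walk.mem_support_iff_exists_getVert.mp hx
  have hi0 : i ≠ 0 := by rintro rfl; simp at hab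
  have hil : i < p.length := hi.lt_of_ne (by rintro rfl; simp at hab)
  obtain ⟨y, z, hyz, hnbr⟩ :=
    Set.ncard_eq_two.mp (hp.ncard_neighborSet_toSubgraph_internal_eq_two hi0 hil)
  have hedge (w : V) (hw : w ∈ ({y, z} : Set V)) : s(p.getVert i, w) = e := by
    rw [← hnbr, Subgraph.mem_neighborSet, Walk.adj_toSubgraph_iff_mem_edges] at hw
    exact he _ hw (Sym2.mem_mk_left _ _)
  exact hyz (Sym2.congr_right.mp ((hedge y (by simp)).trans (hedge z (by simp)).symm))

lemma isAltWalk_iff {u v : V} {p : G.Walk u v} :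
    IsAltWalk M p ↔ p.edges.IsChain (fun e f => e ∈ M ↔ f ∉ M) :=
  Iff.rfl

lemma isSaturatedPath_cons_nil {u v : V} (h : G.Adj u v) :
    IsSaturatedPath M (Walk.cons h Walk.nil) ↔ s(u, v) ∈ M := by
  simp [IsSaturatedPath, isAltWalk_iff, Walk.cons_isPath_iff, h.ne]

lemma isSaturatedPath_cons_cons {u a b v : V} (h : G.Adj u a) (h' : G.Adj a b)
    (q : G.Walk b v) :
    IsSaturatedPath M (Walk.cons h (Walk.cons h' q)) ↔
      s(u, a) ∈ M ∧ s(a, b) ∉ M ∧ u ∉ (Walk.cons h' q).support ∧ a ∉ q.support ∧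
        IsSaturatedPath M q := by
  simp only [IsSaturatedPath, isAltWalk_iff, Walk.cons_isPath_iff, Walk.edges_cons,
    List.isChain_cons_cons, Walk.length_cons, Nat.odd_add_one, not_not, List.head?_cons,
    Option.some.injEq, forall_eq', List.isChain_cons (l := q.edges), Option.mem_def]
  constructor
  · rintro ⟨⟨⟨hq, ha⟩, hu⟩, hodd, ⟨hua, hhead, hchain⟩, huaM⟩
    have habM := hua.mp huaM
    exact ⟨huaM, habM, hu, ha, hq, hodd, hchain, fun e he => not_not.mp ((hhead e he).not.mp habM)⟩
  · rintro ⟨huaM, habM, hu, ha, hq, hodd, hchain, hhead⟩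
    exact ⟨⟨⟨hq, ha⟩, hu⟩, hodd, ⟨iff_of_true huaM habM, fun e he => iff_of_false habM
      (not_not.mpr (hhead e he)), hchain⟩, huaM⟩

lemma IsSaturatedPath.ne {u v : V} {p : G.Walk u v} (hp : IsSaturatedPath M p) : u ≠ v := by
  rintro rfl
  simpa [Walk.length_eq_zero_iff.mpr (Walk.isPath_iff_nil.mp hp.1)] using hp.2.1

lemma IsSaturatedPath.exists_isPerfectMatchingSetOn (hM : IsPerfectMatchingSet G M) {u v : V}
    {p : G.Walk u v} (hp : IsSaturatedPath M p) :
    ∃ N, IsPerfectMatchingSetOn G N {u, v}ᶜ ∧ ∀ e ∈ N, e ∈ M ∨ e ∈ p.edges := by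
  induction hn : p.length using Nat.strong_induction_on generalizing u with
  | _ n ih =>
  have hM' := hM.isPerfectMatchingSetOn_univ
  match p, hp with
  | .nil, hp => exact absurd hp.2.1 (by simp)
  | .cons h .nil, hp =>
    rw [isSaturatedPath_cons_nil] at hp
    refine ⟨M \ {s(u, v)}, ?_, fun e he => .inl he.1⟩
    simpa [Set.compl_eq_univ_sdiff] using hM'.diff_singleton hp
  | .cons (v := a) h (.cons (v := b) h' q), hp =>
    obtain ⟨huaM, -, hu, -, hq⟩ := (isSaturatedPath_cons_cons h h' q).mp hp
    obtain ⟨N, hN, hNsub⟩ := ih q.length (by simp [← hn]) hq rfl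
    have hu' : u ∉ q.support := fun huq => hu (List.mem_cons_of_mem _ huq)
    have hub : u ≠ b := fun hub => hu' (hub ▸ q.start_mem_support)
    have huv : u ≠ v := fun huv => hu' (huv ▸ q.end_mem_support)
    have hauN : s(a, u) ∈ N := by
      obtain ⟨y, hy⟩ := hN.exists_mem (x := u) (by simp [hub, huv])
      rcases hNsub _ hy with hyM | hyq
      · rwa [hM'.eq_of_mem hyM huaM (Sym2.mem_mk_left _ _) (Sym2.mem_mk_left _ _),
          Sym2.eq_swap] at hy
      · exact absurd (q.fst_mem_support_of_mem_edges hyq) hu'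
    refine ⟨_, hN.exchange hq.ne h'.symm hauN, ?_⟩
    rintro e (rfl | ⟨he, -⟩)
    · simp [Sym2.eq_swap]
    · rcases hNsub e he with heM | heq
      · exact .inl heM
      · exact .inr (by simp [heq])

theorem exists_isSaturatedPath_of_isPerfectMatchingSetOn [Finite V]
    (hM : IsPerfectMatchingSet G M) {u v : V} (huv : u ≠ v)
    (hN : IsPerfectMatchingSetOn G N {u, v}ᶜ) :
    ∃ p : G.Walk u v, IsSaturatedPath M p ∧ ∀ e ∈ p.edges, e ∈ M ∪ N := by
  induction hn : (N \ M).ncard using Nat.strong_induction_on generalizing N u with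
  | _ n ih =>
  have hM' := hM.isPerfectMatchingSetOn_univ
  obtain ⟨u', hu'⟩ := hM'.exists_mem (Set.mem_univ u)
  have hadj := hM'.adj hu'
  by_cases hu'v : u' = v
  · subst hu'v
    exact ⟨.cons hadj .nil, (isSaturatedPath_cons_nil hadj).mpr hu', by simp [hu']⟩
  obtain ⟨u'', hu''⟩ := hN.exists_mem (x := u') (by simp [hadj.ne.symm, hu'v])
  have hadj' := hN.adj hu''
  have hu''S := hN.mem_of_mem hu'' (Sym2.mem_mk_right _ _)
  simp only [Set.mem_compl_iff, Set.mem_insert_iff, Set.mem_singleton_iff, not_or] at hu''S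
  have hu''M : s(u', u'') ∉ M := fun h => hu''S.1 <| Sym2.congr_right.mp <|
    (hM'.eq_of_mem h hu' (Sym2.mem_mk_left _ _) (Sym2.mem_mk_right _ _)).trans (Sym2.eq_swap)
  obtain ⟨q, hq, hqsub⟩ := ih _ (hn ▸ ncard_insert_sdiff_singleton_sdiff_lt hu' hu'' hu''M)
    hu''S.2 (hN.exchange huv hadj hu'') rfl
  have hu_q : u ∉ q.support := fun hx =>
    (hq.1.eq_or_eq_of_forall_mem_edges hx fun e he => hM'.eq_of_mem_union_exchange hN
      (by simp) hu' hu'' (Sym2.mem_mk_left _ _) (hqsub e he)).elim (hu''S.1 ·.symm) huv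
  have hu'_q : u' ∉ q.support := fun hx =>
    (hq.1.eq_or_eq_of_forall_mem_edges hx fun e he => hM'.eq_of_mem_union_exchange hN
      (by simp) hu' hu'' (Sym2.mem_mk_right _ _) (hqsub e he)).elim hadj'.ne hu'v
  refine ⟨.cons hadj (.cons hadj' q),
    (isSaturatedPath_cons_cons hadj hadj' q).mpr ⟨hu', hu''M, ?_, hu'_q, hq⟩, ?_⟩
  · simpa [hadj.ne] using hu_q
  · simp only [Walk.edges_cons, List.mem_cons]
    rintro e (rfl | rfl | he)
    · exact .inl hu'
    · exact .inr hu''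
    · rcases hqsub e he with heM | rfl | ⟨heN, -⟩
      exacts [.inl heM, .inl hu', .inr heN]

end

theorem stmt8 [Finite V] (G : SimpleGraph V) (M : Set (Sym2 V))
    (hM : IsPerfectMatchingSet G M) (u v : V) :
    Factorizable (G.induce ({u, v}ᶜ : Set V)) ↔
      ∃ p : G.Walk u v, IsSaturatedPath M p := by
  rw [factorizable_induce_iff]
  constructor
  · rintro ⟨N, hN⟩
    have huv : u ≠ v := by
      rintro rfl
      exact hM.not_isPerfectMatchingSetOn_compl_singleton u (by simpa using hN)
    obtain ⟨p, hp, -⟩ := exists_isSaturatedPath_of_isPerfectMatchingSetOn hM huv hN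
    exact ⟨p, hp⟩
  · rintro ⟨p, hp⟩
    obtain ⟨N, hN, -⟩ := hp.exists_isPerfectMatchingSetOn hM
    exact ⟨N, hN⟩
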